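/- For CTL*: if φ̂ = Θ ∧ φ' is satisfiable, then φ̂ is satisfied at some state of a serial Kripke model in which p_{n+1} is true at every state. -/
import Mathlib


/-- Serial Kripke models. -/
structure Kripke (S : Type) where
  rel : S → S → Prop
  serial : ∀ s, ∃ t, rel s t
  val : ℕ → S → Prop

def isPath {S : Type} (M : Kripke S) (π : ℕ → S) : Prop :=
  ∀ i, M.rel (π i) (π (i + 1))

mutual
/-- CTL* state formulas. -/
inductive SF : Type where
  | var : ℕ → SF
  | bot : SF
  | imp : SF → SF → SF
  | all : PF → SF
/-- CTL* path formulas. -/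
inductive PF : Type where
  | st : SF → PF
  | imp : PF → PF → PF
  | unt : PF → PF → PF
  | next : PF → PF
end

def SF.neg (φ : SF) : SF := .imp φ .bot
def PF.neg (ϑ : PF) : PF := .imp ϑ (.st .bot)
def PF.top : PF := PF.neg (.st .bot)
/-- □ϑ = ¬(⊤ U ¬ϑ). -/
def PF.box (ϑ : PF) : PF := PF.neg (.unt PF.top (PF.neg ϑ))
/-- ∃ϑ = ¬∀¬ϑ. -/
def SF.exa (ϑ : PF) : SF := SF.neg (.all (PF.neg ϑ))
def SF.conj (φ ψ : SF) : SF := SF.neg (.imp φ (SF.neg ψ))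
def SF.iffc (φ ψ : SF) : SF := SF.conj (.imp φ ψ) (.imp ψ φ)
/-- AG φ = ∀□φ. -/
def SF.ag (φ : SF) : SF := .all (PF.box (.st φ))
/-- EX φ = ∃Xφ. -/
def SF.ex (φ : SF) : SF := SF.exa (.next (.st φ))

mutual
/-- Satisfaction of state formulas at states. -/
def ssat {S : Type} (M : Kripke S) : SF → S → Prop
  | .var n, s => M.val n s
  | .bot, _ => False
  | .imp a b, s => ssat M a s → ssat M b s
  | .all ϑ, s => ∀ π : ℕ → S, isPath M π → π 0 = s → psat M ϑ π
/-- Satisfaction of path formulas on paths. -/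
def psat {S : Type} (M : Kripke S) : PF → (ℕ → S) → Prop
  | .st φ, π => ssat M φ (π 0)
  | .imp a b, π => psat M a π → psat M b π
  | .unt a b, π => ∃ i, psat M b (fun j => π (i + j)) ∧
      ∀ j, j < i → psat M a (fun l => π (j + l))
  | .next a, π => psat M a (fun j => π (j + 1))
end

def ssatisfiable (φ : SF) : Prop := ∃ (S : Type) (M : Kripke S) (s : S), ssat M φ s

mutual
def soccurs (q : ℕ) : SF → Prop
  | .var n => n = q
  | .bot => False
  | .imp a b => soccurs q a ∨ soccurs q b
  | .all ϑ => poccurs q ϑ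
def poccurs (q : ℕ) : PF → Prop
  | .st φ => soccurs q φ
  | .imp a b => poccurs q a ∨ poccurs q b
  | .unt a b => poccurs q a ∨ poccurs q b
  | .next a => poccurs q a
end

mutual
/-- The path-relativizing translation ·' with guard variable q:
(∀α)' = ∀(□q → α'), homomorphic elsewhere. -/
def srel (q : ℕ) : SF → SF
  | .var n => .var n
  | .bot => .bot
  | .imp a b => .imp (srel q a) (srel q b)
  | .all ϑ => .all (.imp (PF.box (.st (.var q))) (prel q ϑ))
def prel (q : ℕ) : PF → PF
  | .st φ => .st (srel q φ)
  | .imp a b => .imp (prel q a) (prel q b)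
  | .unt a b => .unt (prel q a) (prel q b)
  | .next a => .next (prel q a)
end

/-- Θ = q ∧ AG(EX q ↔ q). -/
def ThetaS (q : ℕ) : SF :=
  SF.conj (.var q) (SF.ag (SF.iffc (SF.ex (.var q)) (.var q)))

/-- χ₀ = ∀□p, χ_{k+1} = p ∧ EX(¬p ∧ EX χ_k); p is var 0. -/
def chiS : ℕ → SF
  | 0 => SF.ag (.var 0)
  | k + 1 => SF.conj (.var 0) (SF.ex (SF.conj (SF.neg (.var 0)) (SF.ex (chiS k))))

/-- A_m = χ_m ∧ EX AG ¬p. -/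
def AformS (m : ℕ) : SF := SF.conj (chiS m) (SF.ex (SF.ag (SF.neg (.var 0))))

/-- B_m = EX A_m. -/
def BformS (m : ℕ) : SF := SF.ex (AformS m)

mutual
/-- The substitution σ : pᵢ ↦ Bᵢ for 1 ≤ i ≤ n+1. -/
def sigmaS (n : ℕ) : SF → SF
  | .var i => if 1 ≤ i ∧ i ≤ n + 1 then BformS i else .var i
  | .bot => .bot
  | .imp a b => .imp (sigmaS n a) (sigmaS n b)
  | .all ϑ => .all (sigmaP n ϑ)
def sigmaP (n : ℕ) : PF → PF
  | .st φ => .st (sigmaS n φ)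
  | .imp a b => .imp (sigmaP n a) (sigmaP n b)
  | .unt a b => .unt (sigmaP n a) (sigmaP n b)
  | .next a => .next (sigmaP n a)
end

/-! ### Auxiliary machinery for the proof -/

noncomputable def extPath {S : Type} (M : Kripke S) (t : S) : ℕ → S
  | 0 => t
  | k + 1 => Classical.choose (M.serial (extPath M t k))

theorem isPath_extPath {S : Type} (M : Kripke S) (t : S) : isPath M (extPath M t) :=
  fun k => Classical.choose_spec (M.serial (extPath M t k))

theorem isPath_shift {S : Type} {M : Kripke S} {π : ℕ → S} (h : isPath M π) (i : ℕ) :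
    isPath M (fun j => π (i + j)) := fun k => h (i + k)

def consPath {S : Type} (t : S) (ρ : ℕ → S) : ℕ → S
  | 0 => t
  | j + 1 => ρ j

theorem isPath_consPath {S : Type} {M : Kripke S} {t : S} {ρ : ℕ → S}
    (h1 : M.rel t (ρ 0)) (h2 : isPath M ρ) : isPath M (consPath t ρ)
  | 0 => h1
  | j + 1 => h2 j

theorem ssat_conj {S : Type} (N : Kripke S) (a b : SF) (t : S) :
    ssat N (SF.conj a b) t ↔ ssat N a t ∧ ssat N b t := by
  simp only [SF.conj, SF.neg, ssat]
  tauto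

theorem psat_box {S : Type} (N : Kripke S) (ϑ : PF) (π : ℕ → S) :
    psat N (PF.box ϑ) π ↔ ∀ i, psat N ϑ (fun j => π (i + j)) := by
  simp only [PF.box, PF.neg, PF.top, psat, ssat]
  constructor
  · intro h i
    by_contra hc
    exact h ⟨i, fun hp => hc hp, fun j _ hf => hf⟩
  · rintro h ⟨i, hi, -⟩
    exact hi (h i)

theorem ssat_ag {S : Type} (N : Kripke S) (φ : SF) (t : S) :
    ssat N (SF.ag φ) t ↔ ∀ π, isPath N π → π 0 = t → ∀ i, ssat N φ (π i) := by
  simp only [SF.ag, ssat]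
  constructor
  · intro h π hπ h0 i
    have h1 := h π hπ h0
    rw [psat_box] at h1
    exact h1 i
  · intro h π hπ h0
    rw [psat_box]
    intro i
    exact h π hπ h0 i

theorem ssat_ex {S : Type} (N : Kripke S) (φ : SF) (t : S) :
    ssat N (SF.ex φ) t ↔ ∃ u, N.rel t u ∧ ssat N φ u := by
  simp only [SF.ex, SF.exa, SF.neg, PF.neg, ssat, psat]
  constructor
  · intro h
    by_contra hc
    push_neg at hc
    apply h
    intro π hπ h0 hnext
    exact hc (π 1) (h0 ▸ hπ 0) hnext
  · rintro ⟨u, hu, hφ⟩ h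
    exact h (consPath t (extPath N u)) (isPath_consPath hu (isPath_extPath N u)) rfl hφ

theorem reach_along {S : Type} (M : Kripke S) {π : ℕ → S} (hπ : isPath M π) (i : ℕ) :
    Relation.ReflTransGen M.rel (π 0) (π i) := by
  induction i with
  | zero => exact .refl
  | succ k ih => exact ih.tail (hπ k)

theorem reach_exists_path {S : Type} (M : Kripke S) {s t : S}
    (h : Relation.ReflTransGen M.rel s t) :
    ∃ (π : ℕ → S) (i : ℕ), isPath M π ∧ π 0 = s ∧ π i = t := by
  induction h with
  | refl => exact ⟨extPath M s, 0, isPath_extPath M s, rfl, rfl⟩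
  | @tail b c hab hbc ih =>
    obtain ⟨π, i, hπ, h0, hi⟩ := ih
    refine ⟨fun j => if j ≤ i then π j else extPath M c (j - (i + 1)), i + 1, ?_, ?_, ?_⟩
    · intro j
      rcases lt_trichotomy j i with hj | rfl | hj
      · simp only [if_pos hj.le, if_pos (Nat.succ_le_of_lt hj)]
        exact hπ j
      · simp only [le_refl, if_pos, if_neg (by omega : ¬ j + 1 ≤ j), Nat.sub_self]
        rw [hi]; exact hbc
      · simp only [if_neg (by omega : ¬ j ≤ i), if_neg (by omega : ¬ j + 1 ≤ i)]
        have : j + 1 - (i + 1) = (j - (i + 1)) + 1 := by omega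
        rw [this]
        exact isPath_extPath M c _
    · simp [h0]
    · simp only [if_neg (by omega : ¬ i + 1 ≤ i), Nat.sub_self]
      rfl
/-- States reachable from `s` satisfying variable `q`. -/
abbrev SubS {S : Type} (M : Kripke S) (q : ℕ) (s : S) : Type :=
  {t : S // Relation.ReflTransGen M.rel s t ∧ M.val q t}

/-- Restriction of `M` to reachable `q`-states. -/
def subModel {S : Type} (M : Kripke S) (q : ℕ) (s : S)
    (h : ∀ t, Relation.ReflTransGen M.rel s t → M.val q t → ∃ u, M.rel t u ∧ M.val q u) :
    Kripke (SubS M q s) where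
  rel a b := M.rel a.1 b.1
  serial a := by
    obtain ⟨u, hru, hqu⟩ := h a.1 a.2.1 a.2.2
    exact ⟨⟨u, a.2.1.tail hru, hqu⟩, hru⟩
  val m t := M.val m t.1

mutual
theorem transS {S : Type} (M : Kripke S) (q : ℕ) (s : S)
    (h : ∀ t, Relation.ReflTransGen M.rel s t → M.val q t → ∃ u, M.rel t u ∧ M.val q u)
    (ψ : SF) (t : SubS M q s) :
    ssat M (srel q ψ) t.1 ↔ ssat (subModel M q s h) ψ t := by
  match ψ with
  | .var m => exact Iff.rfl
  | .bot => exact Iff.rfl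
  | .imp a b =>
    simp only [srel, ssat]
    exact imp_congr (transS M q s h a t) (transS M q s h b t)
  | .all ϑ =>
    simp only [srel, ssat, psat]
    constructor
    · intro hL π' hπ' h0
      have hπp : isPath M (fun j => (π' j).1) := fun k => hπ' k
      have := hL (fun j => (π' j).1) hπp (congrArg Subtype.val h0)
        (by rintro ⟨i, hi, -⟩; exact hi (π' (i + 0)).2.2)
      exact (transP M q s h ϑ π' hπ').mp this
    · intro hR π hπ h0 hbox
      have hq : ∀ i, M.val q (π i) := by
        intro i
        by_contra hc
        exact hbox ⟨i, fun hp => hc hp, fun _ _ hf => hf⟩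
      have hr : ∀ i, Relation.ReflTransGen M.rel s (π i) := by
        intro i
        have := reach_along M hπ i
        rw [h0] at this
        exact t.2.1.trans this
      let π' : ℕ → SubS M q s := fun i => ⟨π i, hr i, hq i⟩
      have hπ' : isPath (subModel M q s h) π' := fun k => hπ k
      have h0' : π' 0 = t := Subtype.ext h0
      have := (transP M q s h ϑ π' hπ').mpr (hR π' hπ' h0')
      exact this

theorem transP {S : Type} (M : Kripke S) (q : ℕ) (s : S)
    (h : ∀ t, Relation.ReflTransGen M.rel s t → M.val q t → ∃ u, M.rel t u ∧ M.val q u)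
    (ϑ : PF) (π' : ℕ → SubS M q s) (hπ' : isPath (subModel M q s h) π') :
    psat M (prel q ϑ) (fun j => (π' j).1) ↔ psat (subModel M q s h) ϑ π' := by
  match ϑ with
  | .st φ =>
    simp only [prel, psat]
    exact transS M q s h φ (π' 0)
  | .imp a b =>
    simp only [prel, psat]
    exact imp_congr (transP M q s h a π' hπ') (transP M q s h b π' hπ')
  | .unt a b =>
    simp only [prel, psat]
    constructor
    · rintro ⟨i, hb, ha⟩
      refine ⟨i, (transP M q s h b (fun j => π' (i + j)) (isPath_shift hπ' i)).mp hb, ?_⟩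
      intro j hj
      exact (transP M q s h a (fun l => π' (j + l)) (isPath_shift hπ' j)).mp (ha j hj)
    · rintro ⟨i, hb, ha⟩
      refine ⟨i, (transP M q s h b (fun j => π' (i + j)) (isPath_shift hπ' i)).mpr hb, ?_⟩
      intro j hj
      exact (transP M q s h a (fun l => π' (j + l)) (isPath_shift hπ' j)).mpr (ha j hj)
  | .next a =>
    simp only [prel, psat]
    exact transP M q s h a (fun j => π' (j + 1)) (fun k => hπ' (k + 1))
end
mutual
theorem erasS {S : Type} (N : Kripke S) (q : ℕ) (hq : ∀ t, N.val q t) (ψ : SF) (t : S) :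
    ssat N (srel q ψ) t ↔ ssat N ψ t := by
  match ψ with
  | .var m => exact Iff.rfl
  | .bot => exact Iff.rfl
  | .imp a b =>
    simp only [srel, ssat]
    exact imp_congr (erasS N q hq a t) (erasS N q hq b t)
  | .all ϑ =>
    simp only [srel, ssat, psat]
    constructor
    · intro hL π hπ h0
      exact (erasP N q hq ϑ π).mp (hL π hπ h0 (by rintro ⟨i, hi, -⟩; exact hi (hq _)))
    · intro hR π hπ h0 _
      exact (erasP N q hq ϑ π).mpr (hR π hπ h0)

theorem erasP {S : Type} (N : Kripke S) (q : ℕ) (hq : ∀ t, N.val q t) (ϑ : PF) (π : ℕ → S) :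
    psat N (prel q ϑ) π ↔ psat N ϑ π := by
  match ϑ with
  | .st φ =>
    simp only [prel, psat]
    exact erasS N q hq φ (π 0)
  | .imp a b =>
    simp only [prel, psat]
    exact imp_congr (erasP N q hq a π) (erasP N q hq b π)
  | .unt a b =>
    simp only [prel, psat]
    constructor
    · rintro ⟨i, hb, ha⟩
      exact ⟨i, (erasP N q hq b _).mp hb, fun j hj => (erasP N q hq a _).mp (ha j hj)⟩
    · rintro ⟨i, hb, ha⟩
      exact ⟨i, (erasP N q hq b _).mpr hb, fun j hj => (erasP N q hq a _).mpr (ha j hj)⟩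
  | .next a =>
    simp only [prel, psat]
    exact erasP N q hq a _
end

theorem theta_everywhere {S : Type} (N : Kripke S) (q : ℕ) (hq : ∀ t, N.val q t) (t : S) :
    ssat N (ThetaS q) t := by
  rw [ThetaS, ssat_conj]
  refine ⟨hq t, ?_⟩
  rw [ssat_ag]
  intro π hπ h0 i
  rw [SF.iffc, ssat_conj]
  constructor
  · intro _
    exact hq _
  · intro _
    rw [ssat_ex]
    obtain ⟨u, hu⟩ := N.serial (π i)
    exact ⟨u, hu, hq u⟩
/-- If φ̂ = Θ ∧ φ' is satisfiable, then it is satisfied at some state of a serial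
Kripke model in which p_{n+1} holds at every state. -/
theorem ctlstar_guarded_sat_everywhere (n : ℕ) (φ : SF)
    (hvars : ∀ q, soccurs q φ → 1 ≤ q ∧ q ≤ n)
    (hsat : ssatisfiable (SF.conj (ThetaS (n + 1)) (srel (n + 1) φ))) :
    ∃ (S : Type) (M : Kripke S) (s : S),
      ssat M (SF.conj (ThetaS (n + 1)) (srel (n + 1) φ)) s ∧ ∀ t : S, M.val (n + 1) t := by
  obtain ⟨S, M, s, hs⟩ := hsat
  rw [ssat_conj] at hs
  obtain ⟨hΘ, hφ⟩ := hs
  rw [ThetaS, ssat_conj] at hΘ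
  obtain ⟨hqs, hag⟩ := hΘ
  rw [ssat_ag] at hag
  have hqs' : M.val (n + 1) s := hqs
  have hEX : ∀ t, Relation.ReflTransGen M.rel s t → M.val (n + 1) t →
      ∃ u, M.rel t u ∧ M.val (n + 1) u := by
    intro t hr hqt
    obtain ⟨π, i, hπ, h0, hi⟩ := reach_exists_path M hr
    have hiff := hag π hπ h0 i
    rw [SF.iffc, ssat_conj] at hiff
    have h2 : ssat M (.imp (.var (n + 1)) (SF.ex (.var (n + 1)))) (π i) := hiff.2
    have hex : ssat M (SF.ex (.var (n + 1))) t := by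
      rw [hi] at h2
      exact h2 hqt
    rw [ssat_ex] at hex
    exact hex
  refine ⟨SubS M (n + 1) s, subModel M (n + 1) s hEX, ⟨s, .refl, hqs'⟩, ?_, fun t => t.2.2⟩
  have hq' : ∀ t' : SubS M (n + 1) s, (subModel M (n + 1) s hEX).val (n + 1) t' :=
    fun t' => t'.2.2
  rw [ssat_conj]
  refine ⟨theta_everywhere _ _ hq' _, ?_⟩
  exact (erasS _ _ hq' φ _).mpr ((transS M (n + 1) s hEX φ ⟨s, .refl, hqs'⟩).mp hφ)
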